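/- arXiv:2305.15613 — 3 statements merged into one kernel-verified Lean document; each statement's English description precedes it below -/
import Mathlib

section
/- The rows of the simplex matrix are orthogonal with constant norm: P_n · P_nᵀ = (1 + 1/n) · I_n, where I_n is the n×n identity matrix. In particular every row of P_n has Euclidean norm p = √(1 + 1/n). -/
/-- κ = −(1+√(n+1))/n^{3/2} -/
noncomputable def simplexKappa (n : ℕ) : ℝ :=
  -(1 + Real.sqrt (n + 1)) / (n : ℝ) ^ ((3 : ℝ) / 2)

/-- μ = √(1 + 1/n) -/
noncomputable def simplexMu (n : ℕ) : ℝ := Real.sqrt (1 + 1 / n)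

/-- The vertices p_1, …, p_{n+1} ∈ ℝ^n of the regular n-simplex (0-indexed by `Fin (n+1)`):
`p_1 = n^{-1/2}·𝟙` and `p_i = κ·𝟙 + μ·e_{i-1}` for `2 ≤ i ≤ n+1`. -/
noncomputable def simplexVertex (n : ℕ) (i : Fin (n + 1)) : EuclideanSpace ℝ (Fin n) :=
  WithLp.toLp 2 fun j =>
    if (i : ℕ) = 0 then (n : ℝ) ^ (-(1 : ℝ) / 2)
    else simplexKappa n + (if (j : ℕ) = (i : ℕ) - 1 then simplexMu n else 0)

open Matrix

/-- The n×(n+1) matrix P_n whose i-th column is the simplex vertex p_i. -/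
noncomputable def simplexP (n : ℕ) : Matrix (Fin n) (Fin (n + 1)) ℝ :=
  Matrix.of fun j i => simplexVertex n i j


/-!
Write `a = n^{-1/2}`. The first column of `P_n` is `a𝟙` and the remaining block is `κJ + μI`
(`J` the all-ones matrix), so every entry of `P_n P_nᵀ` is `a² + nκ² + 2κμ`, plus `μ²` on the
diagonal. The constants are chosen so that the first coefficient vanishes (with `t = √n`,
`s = √(n+1)` it reduces to `s² = t² + 1`), and `μ² = 1 + 1/n`.
-/

theorem sum_const_add_ite_mul_const_add_ite {R ι : Type*} [CommRing R] [Fintype ι]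
    [DecidableEq ι] (c d : R) (j k : ι) :
    ∑ i, (c + if j = i then d else 0) * (c + if k = i then d else 0) =
      Fintype.card ι * c ^ 2 + 2 * c * d + if j = k then d ^ 2 else 0 := by
  simp only [add_mul, mul_add, ite_mul, mul_ite, mul_zero, zero_mul, Finset.sum_add_distrib,
    Finset.sum_ite_eq, Finset.mem_univ, if_true, Finset.sum_const, Finset.card_univ, nsmul_eq_mul]
  split_ifs with h
  · subst h; ring
  · ring

theorem Matrix.norm_row_eq_sqrt_mul_transpose {m n : Type*} [Fintype n] (A : Matrix m n ℝ)
    (j : m) : ‖(EuclideanSpace.equiv n ℝ).symm (A j)‖ = √((A * Aᵀ) j j) := by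
  simp [EuclideanSpace.norm_eq, Matrix.mul_apply, sq]

theorem Real.rpow_neg_one_div_two {x : ℝ} (hx : 0 ≤ x) : x ^ (-(1 : ℝ) / 2) = (√x)⁻¹ := by
  rw [neg_div, Real.rpow_neg hx, Real.sqrt_eq_rpow]

theorem simplexKappa_eq (n : ℕ) : simplexKappa n = -(1 + √(n + 1)) / √n ^ 3 := by
  rw [simplexKappa, show ((3 : ℝ) / 2) = 1 / 2 * (3 : ℕ) by norm_num,
    Real.rpow_mul n.cast_nonneg, Real.rpow_natCast, ← Real.sqrt_eq_rpow]

theorem simplexMu_eq {n : ℕ} (hn : n ≠ 0) : simplexMu n = √(n + 1) / √n := by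
  rw [simplexMu, ← Real.sqrt_div' _ n.cast_nonneg, one_add_div (Nat.cast_ne_zero.mpr hn)]

theorem simplexMu_sq (n : ℕ) : simplexMu n ^ 2 = 1 + 1 / n :=
  Real.sq_sqrt (by positivity)

theorem simplex_allOnes_coeff_eq_zero {n : ℕ} (hn : n ≠ 0) :
    ((n : ℝ) ^ (-(1 : ℝ) / 2)) ^ 2 + n * simplexKappa n ^ 2 + 2 * simplexKappa n * simplexMu n
      = 0 := by
  rw [Real.rpow_neg_one_div_two n.cast_nonneg, simplexKappa_eq, simplexMu_eq hn]
  set t := √(n : ℝ)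
  set s := √((n : ℝ) + 1)
  have ht : t ≠ 0 := Real.sqrt_ne_zero'.mpr (by positivity)
  have htn : t ^ 2 = n := Real.sq_sqrt n.cast_nonneg
  have hs : s ^ 2 = t ^ 2 + 1 := by rw [Real.sq_sqrt (by positivity), htn]
  rw [← htn]
  field_simp
  linear_combination (-1) * hs

theorem simplexP_apply_zero (n : ℕ) (j : Fin n) :
    simplexP n j 0 = (n : ℝ) ^ (-(1 : ℝ) / 2) :=
  rfl

theorem simplexP_apply_succ (n : ℕ) (j i : Fin n) :
    simplexP n j i.succ = simplexKappa n + if j = i then simplexMu n else 0 := by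
  simp [simplexP, simplexVertex, Fin.val_inj]

theorem simplexP_dotProduct {n : ℕ} (hn : n ≠ 0) (j k : Fin n) :
    simplexP n j ⬝ᵥ simplexP n k = if j = k then 1 + 1 / (n : ℝ) else 0 := by
  rw [dotProduct, Fin.sum_univ_succ]
  simp only [simplexP_apply_zero, simplexP_apply_succ]
  rw [sum_const_add_ite_mul_const_add_ite, Fintype.card_fin, ← simplexMu_sq, ← sq]
  have hcoeff := simplex_allOnes_coeff_eq_zero hn
  split_ifs <;> linear_combination hcoeff

theorem simplexP_mul_transpose_general (n : ℕ) :
    simplexP n * (simplexP n)ᵀ = ((1 : ℝ) + 1 / n) • (1 : Matrix (Fin n) (Fin n) ℝ) ∧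
      ∀ j : Fin n, ‖(EuclideanSpace.equiv (Fin (n + 1)) ℝ).symm (simplexP n j)‖ =
        Real.sqrt (1 + 1 / n) := by
  have hP : simplexP n * (simplexP n)ᵀ = ((1 : ℝ) + 1 / n) • (1 : Matrix (Fin n) (Fin n) ℝ) := by
    ext j k
    change simplexP n j ⬝ᵥ simplexP n k = _
    rw [simplexP_dotProduct j.pos.ne', Matrix.smul_apply, Matrix.one_apply, smul_ite,
      smul_eq_mul, mul_one, smul_zero]
  refine ⟨hP, fun j => ?_⟩
  rw [Matrix.norm_row_eq_sqrt_mul_transpose, hP]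
  simp

/-- The rows of the simplex matrix are orthogonal with constant norm:
P_n · P_nᵀ = (1 + 1/n) · I_n; in particular every row of P_n has Euclidean
norm p = √(1 + 1/n). -/
theorem simplexP_mul_transpose (n : ℕ) (hn : 1 ≤ n) :
    simplexP n * (simplexP n)ᵀ = ((1 : ℝ) + 1 / n) • (1 : Matrix (Fin n) (Fin n) ℝ) ∧
      ∀ j : Fin n, ‖(EuclideanSpace.equiv (Fin (n + 1)) ℝ).symm (simplexP n j)‖ =
        Real.sqrt (1 + 1 / n) :=
  simplexP_mul_transpose_general n
end

section
/- (Proposition: the simplex change of basis is orthogonal.) The matrix M_n satisfies M_nᵀ · M_n = I_{n+1}; that is, M_n belongs to the orthogonal group O(n+1). -/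
open Matrix

/-- The (n+1)×(n+1) change-of-basis matrix M_n whose i-th column is
m_i = (1/p)·(p_i, n^{-1/2}) with p = √(1 + 1/n). -/
noncomputable def simplexM (n : ℕ) : Matrix (Fin (n + 1)) (Fin (n + 1)) ℝ :=
  Matrix.of fun j i =>
    (Real.sqrt (1 + 1 / n))⁻¹ *
      (if h : (j : ℕ) < n then simplexVertex n i ⟨j, h⟩ else (n : ℝ) ^ (-(1 : ℝ) / 2))

namespace Matrix

variable {ι R : Type*} [Fintype ι] [DecidableEq ι] [CommRing R]

theorem one_sub_smul_vecMulVec_mem_orthogonalGroup {c : R} {w : ι → R}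
    (hw : c * (w ⬝ᵥ w) = 2) : 1 - c • vecMulVec w w ∈ orthogonalGroup ι R := by
  have hsq : vecMulVec w w * vecMulVec w w = (w ⬝ᵥ w) • vecMulVec w w := by
    rw [vecMulVec_mul_vecMulVec, vecMulVec_smul]
  rw [mem_orthogonalGroup_iff', transpose_sub, transpose_one, transpose_smul, transpose_vecMulVec]
  simp only [sub_mul, mul_sub, one_mul, mul_one, smul_mul_smul_comm, hsq, smul_smul, mul_assoc, hw]
  module

theorem submatrix_id_mem_orthogonalGroup {A : Matrix ι ι R} (hA : A ∈ orthogonalGroup ι R)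
    (e : ι ≃ ι) : A.submatrix id e ∈ orthogonalGroup ι R := by
  rw [mem_orthogonalGroup_iff'] at hA ⊢
  rw [transpose_submatrix, ← submatrix_mul _ _ _ _ _ Function.bijective_id, hA,
    submatrix_one_equiv]

theorem submatrix_id_mem_orthogonalGroup_iff {A : Matrix ι ι R} (e : ι ≃ ι) :
    A.submatrix id e ∈ orthogonalGroup ι R ↔ A ∈ orthogonalGroup ι R := by
  refine ⟨fun h => ?_, fun h => submatrix_id_mem_orthogonalGroup h e⟩
  simpa using submatrix_id_mem_orthogonalGroup h e.symm

end Matrix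

theorem Real.sqrt_one_add_one_div {x : ℝ} (hx : 0 < x) : √(1 + 1 / x) = √(x + 1) / √x := by
  rw [← Real.sqrt_div' _ hx.le]
  field_simp

noncomputable def simplexReflectionCoeff (n : ℕ) : ℝ := (1 + √(n + 1)) / (n * √(n + 1))

noncomputable def simplexReflectionVector (n : ℕ) : Fin (n + 1) → ℝ :=
  Fin.snoc (fun _ => 1) (1 - √(n + 1))

section

variable {n : ℕ}

theorem simplexReflectionCoeff_mul_sqrt_sub_one (hn : n ≠ 0) :
    simplexReflectionCoeff n * (√(n + 1) - 1) = (√(n + 1))⁻¹ := by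
  have hn' : (n : ℝ) ≠ 0 := Nat.cast_ne_zero.mpr hn
  have hb : √(n + 1 : ℝ) ^ 2 = n + 1 := Real.sq_sqrt (by positivity)
  have hb0 : √(n + 1 : ℝ) ≠ 0 := by positivity
  rw [simplexReflectionCoeff]
  field_simp
  linear_combination hb

theorem simplexReflectionCoeff_mul_dotProduct (hn : n ≠ 0) :
    simplexReflectionCoeff n *
      (simplexReflectionVector n ⬝ᵥ simplexReflectionVector n) = 2 := by
  have hn' : (n : ℝ) ≠ 0 := Nat.cast_ne_zero.mpr hn
  have hb : √(n + 1 : ℝ) ^ 2 = n + 1 := Real.sq_sqrt (by positivity)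
  have hb0 : √(n + 1 : ℝ) ≠ 0 := by positivity
  simp only [simplexReflectionCoeff, simplexReflectionVector, dotProduct, Fin.sum_univ_castSucc,
    Fin.snoc_castSucc, Fin.snoc_last, mul_one, Finset.sum_const, Finset.card_univ,
    Fintype.card_fin, nsmul_eq_mul]
  field_simp
  linear_combination (√(n + 1 : ℝ) - 1) * hb

theorem inv_simplexMu_mul_simplexKappa (hn : n ≠ 0) :
    (simplexMu n)⁻¹ * simplexKappa n = -simplexReflectionCoeff n := by
  have hn' : (0 : ℝ) < n := by positivity
  have ha : √(n : ℝ) ^ 2 = n := Real.sq_sqrt hn'.le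
  have ha0 : √(n : ℝ) ≠ 0 := by positivity
  have hb0 : √(n + 1 : ℝ) ≠ 0 := by positivity
  rw [simplexMu, Real.sqrt_one_add_one_div hn', simplexKappa_eq, simplexReflectionCoeff]
  field_simp
  rw [ha]

theorem simplexM_last (hn : n ≠ 0) (i : Fin (n + 1)) :
    simplexM n (Fin.last n) i = (√(n + 1))⁻¹ := by
  have hn' : (0 : ℝ) < n := by positivity
  have ha0 : √(n : ℝ) ≠ 0 := by positivity
  simp only [simplexM, of_apply, Fin.val_last, lt_irrefl, dif_neg, not_false_eq_true,
    Real.sqrt_one_add_one_div hn', Real.rpow_neg_one_div_two hn'.le]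
  field_simp

theorem simplexM_castSucc_zero (hn : n ≠ 0) (j : Fin n) :
    simplexM n j.castSucc 0 = (√(n + 1))⁻¹ := by
  have hn' : (0 : ℝ) < n := by positivity
  have ha0 : √(n : ℝ) ≠ 0 := by positivity
  simp only [simplexM, simplexVertex, of_apply, Fin.val_castSucc, j.is_lt, dif_pos,
    PiLp.toLp_apply, Fin.val_zero, if_true, Real.sqrt_one_add_one_div hn',
    Real.rpow_neg_one_div_two hn'.le]
  field_simp

theorem simplexM_castSucc_succ (hn : n ≠ 0) (j i : Fin n) :
    simplexM n j.castSucc i.succ = (if j = i then 1 else 0) - simplexReflectionCoeff n := by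
  have hmu : simplexMu n ≠ 0 := by unfold simplexMu; positivity
  simp only [simplexM, simplexVertex, of_apply, Fin.val_castSucc, j.is_lt, dif_pos,
    PiLp.toLp_apply, Fin.val_succ, Nat.add_one_ne_zero, if_false, Nat.add_sub_cancel, Fin.val_inj]
  rw [mul_add, mul_ite, mul_zero, ← simplexMu, inv_mul_cancel₀ hmu,
    inv_simplexMu_mul_simplexKappa hn]
  ring

theorem simplexM_submatrix_finRotate (hn : n ≠ 0) :
    (simplexM n).submatrix id (finRotate (n + 1)) =
      1 - simplexReflectionCoeff n •
        vecMulVec (simplexReflectionVector n) (simplexReflectionVector n) := by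
  have hc := simplexReflectionCoeff_mul_sqrt_sub_one hn
  have hb0 : √(n + 1 : ℝ) ≠ 0 := by positivity
  ext j r
  rw [submatrix_apply, id, Matrix.sub_apply, Matrix.smul_apply, smul_eq_mul, vecMulVec_apply]
  induction j using Fin.lastCases with
  | last =>
    induction r using Fin.lastCases with
    | last =>
      simp only [simplexM_last hn, simplexReflectionVector, Fin.snoc_last, one_apply_eq]
      linear_combination (√(n + 1 : ℝ) - 1) * hc + mul_inv_cancel₀ hb0
    | cast r =>
      simp only [simplexM_last hn, simplexReflectionVector, Fin.snoc_last, Fin.snoc_castSucc,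
        one_apply_ne (Fin.castSucc_ne_last r).symm]
      linear_combination -hc
  | cast j =>
    induction r using Fin.lastCases with
    | last =>
      simp only [finRotate_last, simplexM_castSucc_zero hn, simplexReflectionVector,
        Fin.snoc_last, Fin.snoc_castSucc, one_apply_ne (Fin.castSucc_ne_last j)]
      linear_combination -hc
    | cast r =>
      simp only [finRotate_apply, Fin.coeSucc_eq_succ, simplexM_castSucc_succ hn,
        simplexReflectionVector, Fin.snoc_castSucc, one_apply, Fin.castSucc_inj]
      ring

end

/-- (Proposition: the simplex change of basis is orthogonal.)
M_nᵀ · M_n = I_{n+1}; that is, M_n ∈ O(n+1). -/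
theorem simplexM_orthogonal (n : ℕ) (hn : 1 ≤ n) :
    (simplexM n)ᵀ * simplexM n = 1 ∧
      simplexM n ∈ Matrix.orthogonalGroup (Fin (n + 1)) ℝ := by
  have hn0 : n ≠ 0 := Nat.one_le_iff_ne_zero.mp hn
  have hM : simplexM n ∈ orthogonalGroup (Fin (n + 1)) ℝ := by
    rw [← submatrix_id_mem_orthogonalGroup_iff (finRotate (n + 1)),
      simplexM_submatrix_finRotate hn0]
    exact one_sub_smul_vecMulVec_mem_orthogonalGroup (simplexReflectionCoeff_mul_dotProduct hn0)
  exact ⟨(mem_orthogonalGroup_iff' _ _).mp hM, hM⟩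
end

section
/- The simplex change-of-basis matrix M_n is a rotation for odd n and a reflection for even n: det(M_n) = (−1)^{n+1}, i.e., det(M_n) = 1 when n is odd and det(M_n) = −1 when n is even. -/
open Matrix

/-!
Moving the first column of `M_n` to the end turns `μ • M_n`, where `μ = p = √(1 + 1/n)`, into
the bordered matrix `[[μ I + κ J, s 𝟙], [s 𝟙ᵀ, s]]` with `s = n^{-1/2}` and `J` the all-ones
matrix; the move costs the sign `(-1)^n` of an `(n+1)`-cycle. The Schur complement of the corner
`s` is `μ I + (κ - s) J`, of determinant `μ^n (1 + n (κ - s) / μ)` by the matrix determinant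
lemma, and the identity `s (1 + n (κ - s) / μ) = -μ` gives `det (μ • M_n) = (-1)^(n+1) μ^(n+1)`.
-/

namespace Matrix

variable {K : Type*} [Field K] {m : Type*} [Fintype m] [DecidableEq m]

theorem det_smul_one_add_of_const {a : K} (ha : a ≠ 0) (b : K) :
    (a • (1 : Matrix m m K) + of fun _ _ => b).det =
      a ^ Fintype.card m * (1 + Fintype.card m * b / a) := by
  have h : a • (1 : Matrix m m K) + of (fun _ _ => b) =
      a • (1 + replicateCol Unit (fun _ : m => b / a) *
        replicateRow Unit (fun _ : m => (1 : K))) := by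
    ext i j
    simp [Matrix.mul_apply, mul_add, mul_div_cancel₀ _ ha]
  rw [h, det_smul, det_one_add_replicateCol_mul_replicateRow]
  simp [dotProduct, mul_div_assoc]

theorem det_fromBlocks_of_const {ι : Type*} [Fintype ι] [Unique ι] [DecidableEq ι]
    (A : Matrix m m K) (b c : K) {d : K} (hd : d ≠ 0) :
    (fromBlocks A (of fun _ _ => b) (of fun _ _ => c) (of fun _ _ : ι => d)).det =
      d * (A - of fun _ _ => b * c / d).det := by
  let _ : Invertible (of fun _ _ : ι => d) :=
    ⟨of fun _ _ => d⁻¹,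
      Matrix.ext fun i j => by rw [Subsingleton.elim i j]; simp [Matrix.mul_apply, hd],
      Matrix.ext fun i j => by rw [Subsingleton.elim i j]; simp [Matrix.mul_apply, hd]⟩
  rw [det_fromBlocks₂₂, det_unique]
  congr 2
  ext i j
  simp [Matrix.mul_apply, div_eq_mul_inv, mul_right_comm]

end Matrix

theorem finRotate_castAdd_one {n : ℕ} (i : Fin n) :
    finRotate (n + 1) (Fin.castAdd 1 i) = i.succ :=
  Fin.ext (coe_finRotate_of_ne_last (Fin.castSucc_lt_last i).ne)

theorem finRotate_natAdd_fin_one {n : ℕ} (i : Fin 1) :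
    finRotate (n + 1) (Fin.natAdd n i) = 0 := by
  rw [Subsingleton.elim i 0]
  exact finRotate_last

theorem reindex_submatrix_simplexM_finRotate (n : ℕ) :
    reindex finSumFinEquiv.symm finSumFinEquiv.symm
        ((simplexM n).submatrix id (finRotate (n + 1))) =
      (simplexMu n)⁻¹ • fromBlocks (simplexMu n • 1 + of fun _ _ => simplexKappa n)
        (of fun _ _ => (n : ℝ) ^ (-(1 : ℝ) / 2)) (of fun _ _ => (n : ℝ) ^ (-(1 : ℝ) / 2))
        (of fun _ _ : Fin 1 => (n : ℝ) ^ (-(1 : ℝ) / 2)) := by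
  ext (j | j) (i | i) <;>
    simp only [reindex_apply, submatrix_apply, Equiv.symm_symm, finSumFinEquiv_apply_left,
      finSumFinEquiv_apply_right, id, finRotate_castAdd_one, finRotate_natAdd_fin_one]
  all_goals simp [simplexM, simplexVertex, simplexMu, Matrix.one_apply, Fin.val_inj, add_comm]

theorem simplexMu_pos (n : ℕ) : 0 < simplexMu n :=
  Real.sqrt_pos.2 (by positivity)

theorem det_simplexM_eq {n : ℕ} (hn : 0 < n) :
    (simplexM n).det = (-1) ^ n * ((simplexMu n)⁻¹ ^ (n + 1) *
      ((n : ℝ) ^ (-(1 : ℝ) / 2) * (simplexMu n ^ n *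
        (1 + n * (simplexKappa n - (n : ℝ) ^ (-(1 : ℝ) / 2)) / simplexMu n)))) := by
  set s := (n : ℝ) ^ (-(1 : ℝ) / 2)
  have hs : s ≠ 0 := (Real.rpow_pos_of_pos (Nat.cast_pos.2 hn) _).ne'
  have hschur : (simplexMu n • 1 + of fun _ _ => simplexKappa n) - of (fun _ _ => s * s / s) =
      simplexMu n • (1 : Matrix (Fin n) (Fin n) ℝ) + of fun _ _ => simplexKappa n - s := by
    ext
    simp [hs, add_sub_assoc]
  have hrot := det_permute' (finRotate (n + 1)) (simplexM n)
  rw [← det_reindex_self finSumFinEquiv.symm, reindex_submatrix_simplexM_finRotate, det_smul,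
    det_fromBlocks_of_const _ _ _ hs, hschur, det_smul_one_add_of_const (simplexMu_pos n).ne',
    sign_finRotate] at hrot
  simp only [Fintype.card_sum, Fintype.card_fin, add_tsub_cancel_right] at hrot
  -- `hrot` expresses the claimed value without its sign `(-1)^n`, which is its own inverse
  rw [hrot]
  push_cast
  rw [← mul_assoc, ← pow_add, Even.neg_one_pow ⟨n, rfl⟩, one_mul]

theorem neg_simplexMu_eq {n : ℕ} (hn : 0 < n) :
    -simplexMu n = (n : ℝ) ^ (-(1 : ℝ) / 2) *
      (1 + n * (simplexKappa n - (n : ℝ) ^ (-(1 : ℝ) / 2)) / simplexMu n) := by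
  have hn0 : (0 : ℝ) < n := Nat.cast_pos.2 hn
  set a := √(n : ℝ)
  set b := √((n : ℝ) + 1)
  have ha : 0 < a := Real.sqrt_pos.2 hn0
  have hb : 0 < b := Real.sqrt_pos.2 (by positivity)
  have hab : b ^ 2 = a ^ 2 + 1 := by
    rw [Real.sq_sqrt hn0.le, Real.sq_sqrt (by positivity)]
  have hs : (n : ℝ) ^ (-(1 : ℝ) / 2) = a⁻¹ := by
    rw [neg_div, Real.rpow_neg hn0.le, ← Real.sqrt_eq_rpow]
  have hμ : simplexMu n = b / a := by
    rw [simplexMu, ← Real.sqrt_div' _ hn0.le, add_div, div_self hn0.ne']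
  have hκ : simplexKappa n = -(1 + b) / (a ^ 2 * a) := by
    rw [simplexKappa, Real.sq_sqrt hn0.le, show (3 : ℝ) / 2 = 1 + 1 / 2 by norm_num,
      Real.rpow_add hn0, Real.rpow_one, ← Real.sqrt_eq_rpow]
  rw [hs, hμ, hκ, ← Real.sq_sqrt hn0.le]
  field_simp
  linear_combination (-a ^ 2) * hab

/-- The simplex change-of-basis matrix M_n is a rotation for odd n and a reflection
for even n: det(M_n) = (−1)^{n+1}, i.e. det(M_n) = 1 for odd n and −1 for even n. -/
theorem simplexM_det (n : ℕ) (hn : 1 ≤ n) :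
    (simplexM n).det = (-1 : ℝ) ^ (n + 1) := by
  have hμ : simplexMu n ≠ 0 := (simplexMu_pos n).ne'
  rw [det_simplexM_eq hn, mul_left_comm _ (simplexMu n ^ n), ← neg_simplexMu_eq hn, mul_neg,
    ← pow_succ, inv_pow, mul_neg, inv_mul_cancel₀ (pow_ne_zero _ hμ), pow_succ]
end
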